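/- arXiv:1910.05195 — 2 statements merged into one kernel-verified Lean document; each statement's English description precedes it below -/
import Mathlib

section
/- Let μ > 0 and λ ≥ 0, and let P : M₃(ℝ) → M₃(ℝ) be the Saint Venant–Kirchhoff first Piola–Kirchhoff map P(G) = (I + G)·( μ (G + Gᵀ + Gᵀ G) + (λ/2)(2 tr G + ‖G‖²) I ). Then P is differentiable at every G, and its Fréchet derivative satisfies, for every direction A and all i, α ∈ {1,2,3}: (DP(G)[A])_{iα} = Σ_{j,β=1}^{3} c_{iαjβ}(G) A_{jβ}. -/
open Matrix BigOperators

attribute [local instance] Matrix.normedAddCommGroup Matrix.normedSpace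

/-- Squared Frobenius norm of a real 3×3 matrix. -/
noncomputable def frobSq (A : Matrix (Fin 3) (Fin 3) ℝ) : ℝ := ∑ i, ∑ j, (A i j) ^ 2

/-- Kronecker delta on `Fin 3`, valued in `ℝ`. -/
def kd (i j : Fin 3) : ℝ := if i = j then 1 else 0

/-- Linear part `c^l_{iαjβ}(G)` of the Saint Venant–Kirchhoff elasticity coefficients. -/
noncomputable def cL (μ lam : ℝ) (G : Matrix (Fin 3) (Fin 3) ℝ) (i α j β : Fin 3) : ℝ :=
  μ * (kd i j * G α β + kd α j * G i β + kd i j * G β α + kd α β * G i j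
        + kd i β * G j α + kd α β * G j i)
    + lam * (kd i α * G j β + kd α β * kd i j * Matrix.trace G + kd j β * G i α)

/-- Quadratic part `c^q_{iαjβ}(G)` of the Saint Venant–Kirchhoff elasticity coefficients. -/
noncomputable def cQ (μ lam : ℝ) (G : Matrix (Fin 3) (Fin 3) ℝ) (i α j β : Fin 3) : ℝ :=
  μ * (kd i j * (∑ k, G k β * G k α) + G i β * G j α + kd α β * (∑ k, G j k * G i k))
    + lam * ((1 / 2) * kd i j * kd α β * frobSq G + G i α * G j β)

/-- The Saint Venant–Kirchhoff elasticity coefficients `c_{iαjβ}(G)`. -/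
noncomputable def cSVK (μ lam : ℝ) (G : Matrix (Fin 3) (Fin 3) ℝ) (i α j β : Fin 3) : ℝ :=
  μ * (kd β i * kd α j + kd α β * kd i j) + lam * (kd i α * kd j β)
    + cL μ lam G i α j β + cQ μ lam G i α j β

/-- The Saint Venant–Kirchhoff first Piola–Kirchhoff stress in terms of the
displacement gradient `G`. -/
noncomputable def Psvk (μ lam : ℝ) (G : Matrix (Fin 3) (Fin 3) ℝ) :
    Matrix (Fin 3) (Fin 3) ℝ :=
  ((1 : Matrix (Fin 3) (Fin 3) ℝ) + G) *
    (μ • (G + Gᵀ + Gᵀ * G) +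
      ((lam / 2) * (2 * Matrix.trace G + frobSq G)) • (1 : Matrix (Fin 3) (Fin 3) ℝ))

/-!
Write `P(G) = (I + G) S(G)`, where `S(G) = μ (G + Gᵀ + GᵀG) + (λ/2)(2 tr G + ‖G‖²) I` is the second
Piola–Kirchhoff stress `2μE + λ (tr E) I` of the Green–St Venant strain `E = (G + Gᵀ + GᵀG)/2`.
Since `‖G‖² = tr (GᵀG)`, all of `P` is built from transposition, trace and matrix products, so the
product rule gives `DP(G)[A] = A S(G) + (I + G) DS(G)[A]` with
`DS(G)[A] = μ (A + Aᵀ + GᵀA + AᵀG) + λ (tr A + tr (GᵀA)) I`.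
Sorting this by degree in `G` gives three matrix expressions whose entries are the contractions
of `A` with the constant, the linear `c^l` and the quadratic `c^q` part of `c`.
-/

section MatrixCalculus

variable {m n p : Type*} [Fintype m] [Fintype n] [Fintype p]

noncomputable def transposeCLM : Matrix m n ℝ →L[ℝ] Matrix n m ℝ :=
  LinearMap.toContinuousLinearMap (transposeLinearEquiv m n ℝ ℝ).toLinearMap

noncomputable def traceCLM : Matrix n n ℝ →L[ℝ] ℝ :=
  LinearMap.toContinuousLinearMap (traceLinearMap n ℝ ℝ)

noncomputable def mulCLM : Matrix m n ℝ →L[ℝ] Matrix n p ℝ →L[ℝ] Matrix m p ℝ :=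
  (mulLinearMap ℝ).toContinuousBilinearMap

theorem hasFDerivAt_transpose_mul_self (G : Matrix m n ℝ) :
    ∃ L : Matrix m n ℝ →L[ℝ] Matrix n n ℝ, HasFDerivAt (fun X => Xᵀ * X) L G ∧
      ∀ A, L A = Gᵀ * A + Aᵀ * G :=
  ⟨_, mulCLM.hasFDerivAt_of_bilinear transposeCLM.hasFDerivAt (hasFDerivAt_id G), fun _ => rfl⟩

theorem trace_transpose_mul_eq_sum (X Y : Matrix m n ℝ) :
    trace (Xᵀ * Y) = ∑ i, ∑ j, X i j * Y i j := by
  simp only [trace, diag, mul_apply, transpose_apply]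
  exact Finset.sum_comm

end MatrixCalculus

local notation "M3" => Matrix (Fin 3) (Fin 3) ℝ

theorem frobSq_eq_trace : frobSq = fun X => trace (Xᵀ * X) :=
  funext fun X => by simp only [frobSq, trace_transpose_mul_eq_sum, sq]

section SaintVenantKirchhoff

variable (μ lam : ℝ) (G A : M3)

noncomputable def svkStress : M3 :=
  μ • (G + Gᵀ + Gᵀ * G) + ((lam / 2) * (2 * trace G + frobSq G)) • 1

noncomputable def svkStressDeriv : M3 :=
  μ • (A + Aᵀ + (Gᵀ * A + Aᵀ * G)) + (lam * (trace A + trace (Gᵀ * A))) • 1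

noncomputable def svkTangent : M3 :=
  A * svkStress μ lam G + (1 + G) * svkStressDeriv μ lam G A

theorem hasFDerivAt_svkStress :
    ∃ L : M3 →L[ℝ] M3, HasFDerivAt (svkStress μ lam) L G ∧ ∀ A, L A = svkStressDeriv μ lam G A := by
  obtain ⟨LQ, hQ, hLQ⟩ := hasFDerivAt_transpose_mul_self G
  have hfrob : HasFDerivAt frobSq (traceCLM.comp LQ) G := by
    rw [frobSq_eq_trace]
    exact traceCLM.hasFDerivAt.comp G hQ
  have hS := (((hasFDerivAt_id G).add transposeCLM.hasFDerivAt).add hQ).const_smul μ |>.add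
    (((traceCLM.hasFDerivAt.const_mul 2).add hfrob).const_mul (lam / 2) |>.smul_const (1 : M3))
  refine ⟨_, hS, fun A => ?_⟩
  have hsymm : trace (Aᵀ * G) = trace (Gᵀ * A) := by
    rw [← trace_transpose, transpose_mul, transpose_transpose]
  change μ • (A + Aᵀ + LQ A) + ((lam / 2) * (2 * trace A + trace (LQ A))) • (1 : M3) = _
  rw [hLQ, trace_add, hsymm, svkStressDeriv]
  module

theorem hasFDerivAt_Psvk :
    ∃ L : M3 →L[ℝ] M3, HasFDerivAt (Psvk μ lam) L G ∧ ∀ A, L A = svkTangent μ lam G A := by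
  obtain ⟨LS, hS, hLS⟩ := hasFDerivAt_svkStress μ lam G
  have hP : HasFDerivAt (Psvk μ lam) _ G :=
    mulCLM.hasFDerivAt_of_bilinear ((hasFDerivAt_id G).const_add 1) hS
  refine ⟨_, hP, fun A => ?_⟩
  change (1 + G) * LS A + A * svkStress μ lam G = _
  rw [hLS, svkTangent, add_comm]

theorem svkTangent_eq :
    svkTangent μ lam G A =
      (μ • (Aᵀ + A) + (lam * trace A) • (1 : M3))
      + (μ • (A * Gᵀ + G * Aᵀ + A * G + G * A + Aᵀ * G + Gᵀ * A)
          + lam • (trace (Gᵀ * A) • 1 + trace G • A + trace A • G))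
      + (μ • (A * (Gᵀ * G) + G * Aᵀ * G + G * Gᵀ * A)
          + lam • ((frobSq G / 2) • A + trace (Gᵀ * A) • G)) := by
  simp only [svkTangent, svkStress, svkStressDeriv, mul_add, add_mul, Matrix.mul_smul, mul_one,
    one_mul, Matrix.mul_assoc]
  module

variable (i α : Fin 3)

theorem sum_lame_mul :
    ∑ j, ∑ β, (μ * (kd β i * kd α j + kd α β * kd i j) + lam * (kd i α * kd j β)) * A j β
      = (μ • (Aᵀ + A) + (lam * trace A) • (1 : M3)) i α := by
  simp [kd, add_mul, mul_add, Finset.sum_add_distrib, Finset.mul_sum, trace, one_apply]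

theorem sum_cL_mul :
    ∑ j, ∑ β, cL μ lam G i α j β * A j β
      = (μ • (A * Gᵀ + G * Aᵀ + A * G + G * A + Aᵀ * G + Gᵀ * A)
          + lam • (trace (Gᵀ * A) • 1 + trace G • A + trace A • G)) i α := by
  rw [trace_transpose_mul_eq_sum]
  simp [cL, kd, add_mul, mul_add, Finset.sum_add_distrib, Finset.mul_sum, Finset.sum_mul, trace,
    one_apply, mul_apply]
  simp only [mul_comm, mul_left_comm]

theorem sum_cQ_mul :
    ∑ j, ∑ β, cQ μ lam G i α j β * A j β
      = (μ • (A * (Gᵀ * G) + G * Aᵀ * G + G * Gᵀ * A)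
          + lam • ((frobSq G / 2) • A + trace (Gᵀ * A) • G)) i α := by
  rw [trace_transpose_mul_eq_sum]
  simp [cQ, kd, add_mul, mul_add, Finset.sum_add_distrib, Finset.mul_sum, Finset.sum_mul, mul_apply]
  simp only [mul_comm, mul_left_comm]
  ring

end SaintVenantKirchhoff

theorem svk_first_piola_derivative_general (μ lam : ℝ)
    (G : Matrix (Fin 3) (Fin 3) ℝ) :
    ∃ L : Matrix (Fin 3) (Fin 3) ℝ →L[ℝ] Matrix (Fin 3) (Fin 3) ℝ,
      HasFDerivAt (Psvk μ lam) L G ∧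
        ∀ (A : Matrix (Fin 3) (Fin 3) ℝ) (i α : Fin 3),
          L A i α = ∑ j, ∑ β, cSVK μ lam G i α j β * A j β := by
  obtain ⟨L, hL, hLA⟩ := hasFDerivAt_Psvk μ lam G
  refine ⟨L, hL, fun A i α => ?_⟩
  rw [hLA, svkTangent_eq, Matrix.add_apply, Matrix.add_apply, ← sum_lame_mul, ← sum_cL_mul, ← sum_cQ_mul]
  simp only [cSVK, add_mul, Finset.sum_add_distrib]

/-- `P` is Fréchet differentiable at every `G`, and the components of its derivative
are given by the elasticity coefficients:
`(DP(G)[A])_{iα} = Σ_{j,β} c_{iαjβ}(G) A_{jβ}`. -/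
theorem svk_first_piola_derivative (μ lam : ℝ) (hμ : 0 < μ) (hlam : 0 ≤ lam)
    (G : Matrix (Fin 3) (Fin 3) ℝ) :
    ∃ L : Matrix (Fin 3) (Fin 3) ℝ →L[ℝ] Matrix (Fin 3) (Fin 3) ℝ,
      HasFDerivAt (Psvk μ lam) L G ∧
        ∀ (A : Matrix (Fin 3) (Fin 3) ℝ) (i α : Fin 3),
          L A i α = ∑ j, ∑ β, cSVK μ lam G i α j β * A j β :=
  svk_first_piola_derivative_general μ lam G
end

section
/- Let μ > 0 and λ ≥ 0. There exists a constant C > 0, depending only on μ and λ, such that for all real 3×3 matrices G and A: Σ_{i,α,j,β=1}^{3} c_{iαjβ}(G) A_{jβ} A_{iα} ≥ (μ/2) ‖A + Aᵀ‖² + λ (tr A)² − C (‖G‖ + ‖G‖²) ‖A‖². -/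
open Matrix BigOperators

/-- Frobenius norm of a real 3×3 matrix. -/
noncomputable def fro (A : Matrix (Fin 3) (Fin 3) ℝ) : ℝ := Real.sqrt (frobSq A)

/-! At `G = 0` the coefficients reduce to the isotropic tensor
`μ(δ_{βi}δ_{αj} + δ_{αβ}δ_{ij}) + λ δ_{iα}δ_{jβ}`, whose quadratic form in `A` is exactly
`(μ/2)‖A + Aᵀ‖² + λ(tr A)²`. Every coefficient of the remainder `c^l(G) + c^q(G)` is bounded by
`(6μ + 5λ)‖G‖ + (7μ + 2λ)‖G‖²`, and every product `A_{jβ} A_{iα}` by `‖A‖²`, so summing the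
81 terms gives the estimate with `C = 81(7μ + 5λ)`. -/

open Finset

lemma frobSq_nonneg (A : Matrix (Fin 3) (Fin 3) ℝ) : 0 ≤ frobSq A := by
  unfold frobSq; positivity

lemma sq_fro (A : Matrix (Fin 3) (Fin 3) ℝ) : fro A ^ 2 = frobSq A :=
  Real.sq_sqrt (frobSq_nonneg A)

lemma sq_apply_le_frobSq (A : Matrix (Fin 3) (Fin 3) ℝ) (i j : Fin 3) :
    A i j ^ 2 ≤ frobSq A :=
  (single_le_sum (fun l _ => sq_nonneg (A i l)) (mem_univ j)).trans
    (single_le_sum (f := fun k => ∑ l, A k l ^ 2) (fun _ _ => by positivity) (mem_univ i))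

lemma abs_apply_le_fro (A : Matrix (Fin 3) (Fin 3) ℝ) (i j : Fin 3) : |A i j| ≤ fro A :=
  Real.abs_le_sqrt (sq_apply_le_frobSq A i j)

lemma abs_apply_mul_apply_le_frobSq (A : Matrix (Fin 3) (Fin 3) ℝ) (i j k l : Fin 3) :
    |A i j * A k l| ≤ frobSq A := by
  rw [abs_mul, ← sq_fro, sq]
  exact mul_le_mul (abs_apply_le_fro A i j) (abs_apply_le_fro A k l) (abs_nonneg _)
    (Real.sqrt_nonneg _)

lemma abs_sum_le_three_mul {f : Fin 3 → ℝ} {b : ℝ} (h : ∀ k, |f k| ≤ b) :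
    |∑ k, f k| ≤ 3 * b := by
  simpa using (abs_sum_le_sum_abs f univ).trans (sum_le_sum fun k _ => h k)

lemma abs_trace_le (G : Matrix (Fin 3) (Fin 3) ℝ) : |G.trace| ≤ 3 * fro G :=
  abs_sum_le_three_mul fun k => abs_apply_le_fro G k k

lemma abs_kd_mul_le (i j : Fin 3) (x : ℝ) : |kd i j * x| ≤ |x| := by
  unfold kd; split_ifs <;> simp

lemma abs_kd_mul_apply_le (G : Matrix (Fin 3) (Fin 3) ℝ) (a b c d : Fin 3) :
    |kd a b * G c d| ≤ fro G :=
  (abs_kd_mul_le a b _).trans (abs_apply_le_fro G c d)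

lemma abs_cL_le {μ lam : ℝ} (hμ : 0 ≤ μ) (hlam : 0 ≤ lam) (G : Matrix (Fin 3) (Fin 3) ℝ)
    (i α j β : Fin 3) : |cL μ lam G i α j β| ≤ (6 * μ + 5 * lam) * fro G := by
  have htr : |kd α β * kd i j * G.trace| ≤ 3 * fro G := by
    rw [mul_assoc]
    exact (abs_kd_mul_le _ _ _).trans ((abs_kd_mul_le _ _ _).trans (abs_trace_le G))
  unfold cL
  grw [abs_add_le, abs_mul, abs_mul, abs_of_nonneg hμ, abs_of_nonneg hlam]
  repeat grw [abs_add_le]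
  grw [htr]
  repeat grw [abs_kd_mul_apply_le]
  linarith

lemma abs_cQ_le {μ lam : ℝ} (hμ : 0 ≤ μ) (hlam : 0 ≤ lam) (G : Matrix (Fin 3) (Fin 3) ℝ)
    (i α j β : Fin 3) : |cQ μ lam G i α j β| ≤ (7 * μ + 2 * lam) * frobSq G := by
  have hcol : ∀ a b, |∑ k, G k a * G k b| ≤ 3 * frobSq G := fun a b =>
    abs_sum_le_three_mul fun k => abs_apply_mul_apply_le_frobSq G k a k b
  have hrow : ∀ a b, |∑ k, G a k * G b k| ≤ 3 * frobSq G := fun a b =>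
    abs_sum_le_three_mul fun k => abs_apply_mul_apply_le_frobSq G a k b k
  have hhalf : |(1 / 2) * kd i j * kd α β * frobSq G| ≤ frobSq G := by
    rw [mul_assoc, mul_assoc, abs_mul]
    grw [abs_kd_mul_le, abs_kd_mul_le, abs_of_nonneg (frobSq_nonneg G)]
    linarith [frobSq_nonneg G]
  unfold cQ
  grw [abs_add_le, abs_mul, abs_mul, abs_of_nonneg hμ, abs_of_nonneg hlam]
  repeat grw [abs_add_le]
  grw [hhalf, abs_kd_mul_le, abs_kd_mul_le, hcol, hrow, abs_apply_mul_apply_le_frobSq,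
    abs_apply_mul_apply_le_frobSq]
  exact le_of_eq (by ring)

lemma neg_le_sum_mul_apply_mul_apply {c : Fin 3 → Fin 3 → Fin 3 → Fin 3 → ℝ} {M : ℝ}
    (hc : ∀ i α j β, |c i α j β| ≤ M) (A : Matrix (Fin 3) (Fin 3) ℝ) :
    -(81 * M * frobSq A) ≤ ∑ i, ∑ α, ∑ j, ∑ β, c i α j β * A j β * A i α := by
  have hterm : ∀ i α j β, |c i α j β * A j β * A i α| ≤ M * frobSq A := fun i α j β => by
    rw [mul_assoc, abs_mul]
    exact mul_le_mul (hc i α j β) (abs_apply_mul_apply_le_frobSq A j β i α) (abs_nonneg _)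
      ((abs_nonneg _).trans (hc i α j β))
  have hsum := abs_sum_le_three_mul fun i => abs_sum_le_three_mul fun α =>
    abs_sum_le_three_mul fun j => abs_sum_le_three_mul fun β => hterm i α j β
  linarith [neg_abs_le (∑ i, ∑ α, ∑ j, ∑ β, c i α j β * A j β * A i α)]

lemma cSVK_zero_apply (μ lam : ℝ) (i α j β : Fin 3) :
    cSVK μ lam 0 i α j β
      = μ * (kd β i * kd α j + kd α β * kd i j) + lam * (kd i α * kd j β) := by
  simp [cSVK, cL, cQ, frobSq]

lemma cSVK_eq_cSVK_zero_add (μ lam : ℝ) (G : Matrix (Fin 3) (Fin 3) ℝ) (i α j β : Fin 3) :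
    cSVK μ lam G i α j β
      = cSVK μ lam 0 i α j β + (cL μ lam G i α j β + cQ μ lam G i α j β) := by
  rw [cSVK_zero_apply, cSVK]
  ring

lemma sum_cSVK_zero_mul (μ lam : ℝ) (A : Matrix (Fin 3) (Fin 3) ℝ) :
    ∑ i, ∑ α, ∑ j, ∑ β, cSVK μ lam 0 i α j β * A j β * A i α
      = (μ / 2) * frobSq (A + Aᵀ) + lam * A.trace ^ 2 := by
  simp only [cSVK_zero_apply, kd, mul_ite, mul_one, mul_zero, Fin.sum_univ_three, Fin.isValue,
    ↓reduceIte, zero_ne_one, add_zero, Fin.reduceEq, one_ne_zero, ite_self, ite_mul, zero_mul,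
    zero_add, frobSq, Matrix.add_apply, transpose_apply, trace, diag_apply]
  ring

lemma sum_cSVK_mul (μ lam : ℝ) (G A : Matrix (Fin 3) (Fin 3) ℝ) :
    ∑ i, ∑ α, ∑ j, ∑ β, cSVK μ lam G i α j β * A j β * A i α
      = (μ / 2) * frobSq (A + Aᵀ) + lam * A.trace ^ 2
        + ∑ i, ∑ α, ∑ j, ∑ β, (cL μ lam G i α j β + cQ μ lam G i α j β) * A j β * A i α := by
  simp only [← sum_cSVK_zero_mul, ← sum_add_distrib, ← add_mul, ← cSVK_eq_cSVK_zero_add]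

/-- Coercivity of the Saint Venant–Kirchhoff coefficients:
`Σ c_{iαjβ}(G) A_{jβ} A_{iα} ≥ (μ/2)‖A+Aᵀ‖² + λ(tr A)² − C(‖G‖+‖G‖²)‖A‖²`. -/
theorem svk_coercivity (μ lam : ℝ) (hμ : 0 < μ) (hlam : 0 ≤ lam) :
    ∃ C : ℝ, 0 < C ∧ ∀ G A : Matrix (Fin 3) (Fin 3) ℝ,
      ∑ i, ∑ α, ∑ j, ∑ β, cSVK μ lam G i α j β * A j β * A i α
        ≥ (μ / 2) * frobSq (A + Aᵀ) + lam * (Matrix.trace A) ^ 2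
            - C * (fro G + (fro G) ^ 2) * frobSq A := by
  refine ⟨81 * (7 * μ + 5 * lam), by positivity, fun G A => ?_⟩
  have hpert : ∀ i α j β, |cL μ lam G i α j β + cQ μ lam G i α j β|
      ≤ (7 * μ + 5 * lam) * (fro G + fro G ^ 2) := fun i α j β => by
    have hg : 0 ≤ fro G := Real.sqrt_nonneg _
    calc |cL μ lam G i α j β + cQ μ lam G i α j β|
        ≤ (6 * μ + 5 * lam) * fro G + (7 * μ + 2 * lam) * fro G ^ 2 := by
          grw [abs_add_le, abs_cL_le hμ.le hlam, abs_cQ_le hμ.le hlam, sq_fro]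
      _ ≤ (7 * μ + 5 * lam) * (fro G + fro G ^ 2) := by nlinarith
  rw [ge_iff_le, sum_cSVK_mul]
  linarith [neg_le_sum_mul_apply_mul_apply hpert A]
end
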